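/- There is no surjective bi-p-morphism from any finite comb C_n onto the co-tree F₃ consisting of a top element a with three pairwise incomparable minimal immediate predecessors b, c, d. -/

import Mathlib

/-- The `n`-comb: `⟨i, true⟩` is the spine point `xᵢ₊₁`, while `⟨i, false⟩` is the
tooth `xᵢ₊₁'`, a minimal immediate predecessor of `xᵢ₊₁`. -/
structure Comb (n : ℕ) where
  idx : Fin n
  spine : Bool

instance {n : ℕ} : PartialOrder (Comb n) where
  le u v := u = v ∨ (u.idx ≤ v.idx ∧ v.spine = true)
  le_refl u := Or.inl rfl
  le_trans u v w huv hvw := by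
    rcases huv with rfl | ⟨h1, h2⟩
    · exact hvw
    · rcases hvw with rfl | ⟨h3, h4⟩
      · exact Or.inr ⟨h1, h2⟩
      · exact Or.inr ⟨le_trans h1 h3, h4⟩
  le_antisymm u v huv hvu := by
    rcases huv with rfl | ⟨h1, h2⟩
    · rfl
    · rcases hvu with h | ⟨h3, h4⟩
      · exact h.symm
      · obtain ⟨i, b⟩ := u
        obtain ⟨j, c⟩ := v
        have hij : i = j := le_antisymm h1 h3
        have hb : b = true := h4
        have hc : c = true := h2
        subst hij; subst hb; subst hc
        rfl


/-- The co-tree `F₃`: a top element `a` with three pairwise incomparable minimal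
immediate predecessors `b`, `c`, `d`. -/
inductive F3 where
  | a | b | c | d
deriving DecidableEq

instance : Fintype F3 where
  elems := {.a, .b, .c, .d}
  complete x := by cases x <;> decide

def F3.leb : F3 → F3 → Bool
  | _, .a => true
  | x, y => decide (x = y)

instance : PartialOrder F3 where
  le x y := F3.leb x y = true
  le_refl u := by
    show F3.leb u u = true
    cases u <;> decide
  le_trans u v w := by
    show F3.leb u v = true → F3.leb v w = true → F3.leb u w = true
    cases u <;> cases v <;> cases w <;> decide
  le_antisymm u v := by
    show F3.leb u v = true → F3.leb v u = true → u = v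
    cases u <;> cases v <;> decide


/-! If a spine point `xⱼ` is sent to the top `a`, the down condition yields preimages in
`↓xⱼ` of two distinct minimal elements of `F₃`, both different from the image of the tooth `xⱼ'`.
Those preimages lie below some `xᵢ` with `i < j`, so `f xᵢ` is an upper bound of two distinct
minimal elements, i.e. `f xᵢ = a`. By well-founded descent no spine point is sent to `a`; but
every point lies below a spine point, so `a` has no preimage at all. -/

namespace F3

lemma le_a (x : F3) : x ≤ a := rfl

lemma eq_a_of_le_of_le {x y z : F3} (hx : x ≤ z) (hy : y ≤ z) (hxy : x ≠ y) : z = a := by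
  have hx' : leb x z = true := hx
  have hy' : leb y z = true := hy
  revert hx' hy' hxy
  cases x <;> cases y <;> cases z <;> decide

lemma exists_two_ne (t : F3) :
    ∃ y₁ y₂ : F3, y₁ ≠ y₂ ∧ y₁ ≠ t ∧ y₂ ≠ t ∧ y₁ ≠ a ∧ y₂ ≠ a := by
  cases t
  exacts [⟨b, c, by decide⟩, ⟨c, d, by decide⟩, ⟨b, d, by decide⟩, ⟨b, c, by decide⟩]

end F3

namespace Comb

variable {n : ℕ}

lemma le_spine_of_idx_le {u : Comb n} {i : Fin n} (h : u.idx ≤ i) : u ≤ ⟨i, true⟩ :=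
  Or.inr ⟨h, rfl⟩

lemma idx_lt_of_le_spine {u : Comb n} {j : Fin n} (h : u ≤ ⟨j, true⟩)
    (h_tooth : u ≠ ⟨j, false⟩) (h_spine : u ≠ ⟨j, true⟩) : u.idx < j := by
  rcases h with h | ⟨h, -⟩
  · exact absurd h h_spine
  · refine lt_of_le_of_ne h fun hj => ?_
    obtain ⟨i, s⟩ := u
    cases hj
    cases s
    exacts [h_tooth rfl, h_spine rfl]

variable {f : Comb n → F3}

lemma exists_map_spine_eq_a_of_ne (hf : Monotone f) {u v : Comb n} {j : Fin n}
    (hu : u.idx < j) (hv : v.idx < j) (huv : f u ≠ f v) : ∃ i < j, f ⟨i, true⟩ = .a :=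
  ⟨max u.idx v.idx, max_lt hu hv,
    F3.eq_a_of_le_of_le (hf (le_spine_of_idx_le (le_max_left _ _)))
      (hf (le_spine_of_idx_le (le_max_right _ _))) huv⟩

lemma exists_lt_map_spine_eq_a (hf : Monotone f)
    (hdown : ∀ (x : Comb n) (y : F3), y ≤ f x → ∃ z, z ≤ x ∧ f z = y)
    {j : Fin n} (hj : f ⟨j, true⟩ = .a) : ∃ i < j, f ⟨i, true⟩ = .a := by
  have preimage : ∀ y, y ≠ f ⟨j, false⟩ → y ≠ .a → ∃ u : Comb n, u.idx < j ∧ f u = y := by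
    intro y hyt hya
    obtain ⟨u, hu, rfl⟩ := hdown ⟨j, true⟩ y (hj ▸ F3.le_a y)
    exact ⟨u, idx_lt_of_le_spine hu (by rintro rfl; exact hyt rfl)
      (by rintro rfl; exact hya hj), rfl⟩
  obtain ⟨y₁, y₂, h₁₂, h₁t, h₂t, h₁a, h₂a⟩ := F3.exists_two_ne (f ⟨j, false⟩)
  obtain ⟨u₁, hu₁, rfl⟩ := preimage y₁ h₁t h₁a
  obtain ⟨u₂, hu₂, rfl⟩ := preimage y₂ h₂t h₂a
  exact exists_map_spine_eq_a_of_ne hf hu₁ hu₂ h₁₂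

lemma map_spine_ne_a (hf : Monotone f)
    (hdown : ∀ (x : Comb n) (y : F3), y ≤ f x → ∃ z, z ≤ x ∧ f z = y) (j : Fin n) :
    f ⟨j, true⟩ ≠ .a := by
  induction j using WellFoundedLT.induction with
  | ind j ih =>
    intro hj
    obtain ⟨i, hij, hi⟩ := exists_lt_map_spine_eq_a hf hdown hj
    exact ih i hij hi

end Comb

theorem no_surjective_biPMorphism_comb_to_F3_general (n : ℕ) :
    ¬ ∃ f : Comb n → F3,
        Monotone f ∧
        (∀ (x : Comb n) (y : F3), f x ≤ y → ∃ z, x ≤ z ∧ f z = y) ∧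
        (∀ (x : Comb n) (y : F3), y ≤ f x → ∃ z, z ≤ x ∧ f z = y) ∧
        Function.Surjective f := by
  rintro ⟨f, hf, -, hdown, hsurj⟩
  obtain ⟨u, hu⟩ := hsurj .a
  have h_spine : f ⟨u.idx, true⟩ = .a :=
    le_antisymm (F3.le_a _) (hu ▸ hf (Comb.le_spine_of_idx_le le_rfl))
  exact Comb.map_spine_ne_a hf hdown u.idx h_spine

/-- There is no surjective bi-p-morphism from any finite comb `C_n` onto `F₃`. -/
theorem no_surjective_biPMorphism_comb_to_F3 (n : ℕ) (hn : 0 < n) :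
    ¬ ∃ f : Comb n → F3,
        Monotone f ∧
        (∀ (x : Comb n) (y : F3), f x ≤ y → ∃ z, x ≤ z ∧ f z = y) ∧
        (∀ (x : Comb n) (y : F3), y ≤ f x → ∃ z, z ≤ x ∧ f z = y) ∧
        Function.Surjective f :=
  no_surjective_biPMorphism_comb_to_F3_general n
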